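/- Let q ∈ (0,1) and s ∈ (0,1). Then the limit as x → ∞ of Γ_q(x+s) / ([x]_q^s · Γ_q(x)) equals 1. -/

import Mathlib

/-- The q-deformed Gamma function:
    `Γ_q(x) = (1-q)^(1-x) * ∏_{n=0}^∞ (1-q^(n+1))/(1-q^(n+x))`. -/
noncomputable def qGamma (q x : ℝ) : ℝ :=
  (1 - q) ^ (1 - x) * ∏' n : ℕ, (1 - q ^ ((n : ℝ) + 1)) / (1 - q ^ ((n : ℝ) + x))

/-- The q-bracket: `[x]_q = (1-q^x)/(1-q)`. -/
noncomputable def qBracket (q x : ℝ) : ℝ := (1 - q ^ x) / (1 - q)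

/-!
With `L t = logQPochhammer q t = ∑ₙ log (1 - q^(n+t))`, the logarithm of the q-Pochhammer
symbol `(q^t; q)_∞`, the product formula reads `Γ_q(t) = (1-q)^(1-t) exp (L 1 - L t)`, so the
quotient in the theorem is `exp (L x - L (x+s)) / (1 - q^x)^s`. As `|log (1 - u)| ≤ u / (1 - q^t)`
for `0 ≤ u ≤ q^t`, the geometric series bounds `|L t|` by `q^t / ((1-q)(1-q^t)) → 0`, and both
factors tend to `1`.
-/

open Real Filter Topology

section QPochhammer

variable {q : ℝ}

lemma rpow_natCast_add_eq_mul_pow (hq : 0 < q) (n : ℕ) (t : ℝ) :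
    q ^ ((n : ℝ) + t) = q ^ t * q ^ n := by
  rw [rpow_add hq, rpow_natCast, mul_comm]

lemma hasSum_rpow_natCast_add (hq0 : 0 < q) (hq1 : q < 1) (t : ℝ) :
    HasSum (fun n : ℕ => q ^ ((n : ℝ) + t)) (q ^ t / (1 - q)) := by
  simp_rw [rpow_natCast_add_eq_mul_pow hq0, div_eq_mul_inv]
  exact (hasSum_geometric_of_lt_one hq0.le hq1).mul_left _

lemma abs_log_one_sub_le_div {u c : ℝ} (hu : 0 ≤ u) (huc : u ≤ c) (hc : c < 1) :
    |log (1 - u)| ≤ u / (1 - c) := by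
  have h := abs_log_sub_add_sum_range_le (x := u) (by rw [abs_of_nonneg hu]; linarith) 0
  simp only [Finset.range_zero, Finset.sum_empty, zero_add, pow_one, abs_of_nonneg hu] at h
  exact h.trans (div_le_div_of_nonneg_left hu (by linarith) (by linarith))

lemma abs_log_one_sub_rpow_natCast_add_le (hq0 : 0 < q) (hq1 : q < 1) {t : ℝ} (ht : 0 < t)
    (n : ℕ) : |log (1 - q ^ ((n : ℝ) + t))| ≤ q ^ ((n : ℝ) + t) / (1 - q ^ t) :=
  abs_log_one_sub_le_div (rpow_nonneg hq0.le _)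
    (rpow_le_rpow_of_exponent_ge hq0 hq1.le (by linarith [n.cast_nonneg (α := ℝ)]))
    (rpow_lt_one hq0.le hq1 ht)

noncomputable def logQPochhammer (q t : ℝ) : ℝ := ∑' n : ℕ, log (1 - q ^ ((n : ℝ) + t))

lemma summable_log_one_sub_rpow_natCast_add (hq0 : 0 < q) (hq1 : q < 1) {t : ℝ} (ht : 0 < t) :
    Summable fun n : ℕ => log (1 - q ^ ((n : ℝ) + t)) :=
  ((hasSum_rpow_natCast_add hq0 hq1 t).summable.div_const _).of_norm_bounded
    (abs_log_one_sub_rpow_natCast_add_le hq0 hq1 ht)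

lemma abs_logQPochhammer_le (hq0 : 0 < q) (hq1 : q < 1) {t : ℝ} (ht : 0 < t) :
    |logQPochhammer q t| ≤ q ^ t / (1 - q) / (1 - q ^ t) := by
  rw [← norm_eq_abs]
  exact tsum_of_norm_bounded ((hasSum_rpow_natCast_add hq0 hq1 t).div_const _)
    (abs_log_one_sub_rpow_natCast_add_le hq0 hq1 ht)

lemma tendsto_logQPochhammer_atTop (hq0 : 0 < q) (hq1 : q < 1) :
    Tendsto (logQPochhammer q) atTop (𝓝 0) := by
  have hpow : Tendsto (fun t : ℝ => q ^ t) atTop (𝓝 0) :=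
    tendsto_rpow_atTop_of_base_lt_one q (by linarith) hq1
  have hbound : Tendsto (fun t : ℝ => q ^ t / (1 - q) / (1 - q ^ t)) atTop (𝓝 0) := by
    simpa [Pi.div_def] using
      (hpow.div_const (1 - q)).div (tendsto_const_nhds.sub hpow) (by norm_num)
  refine squeeze_zero_norm' ?_ hbound
  filter_upwards [eventually_gt_atTop 0] with t ht
  exact abs_logQPochhammer_le hq0 hq1 ht

lemma qGamma_eq_rpow_mul_exp (hq0 : 0 < q) (hq1 : q < 1) {t : ℝ} (ht : 0 < t) :
    qGamma q t = (1 - q) ^ (1 - t) * exp (logQPochhammer q 1 - logQPochhammer q t) := by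
  have hfactor_pos : ∀ {u : ℝ}, 0 < u → ∀ n : ℕ, 0 < 1 - q ^ ((n : ℝ) + u) :=
    fun hu n => sub_pos.2 (rpow_lt_one hq0.le hq1 (by positivity))
  have hlog_div : ∀ n : ℕ, log ((1 - q ^ ((n : ℝ) + 1)) / (1 - q ^ ((n : ℝ) + t))) =
      log (1 - q ^ ((n : ℝ) + 1)) - log (1 - q ^ ((n : ℝ) + t)) := fun n =>
    log_div (hfactor_pos one_pos n).ne' (hfactor_pos ht n).ne'
  have hsum₁ := summable_log_one_sub_rpow_natCast_add hq0 hq1 one_pos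
  have hsum_t := summable_log_one_sub_rpow_natCast_add hq0 hq1 ht
  rw [qGamma, logQPochhammer, logQPochhammer, ← hsum₁.tsum_sub hsum_t, ← tsum_congr hlog_div,
    rexp_tsum_eq_tprod (fun n => div_pos (hfactor_pos one_pos n) (hfactor_pos ht n))
      (by simpa only [hlog_div] using hsum₁.sub hsum_t)]

lemma qGamma_add_div_qBracket_rpow_mul_qGamma {x s : ℝ} (hq0 : 0 < q) (hq1 : q < 1)
    (hx : 0 < x) (hxs : 0 < x + s) :
    qGamma q (x + s) / (qBracket q x ^ s * qGamma q x) =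
      exp (logQPochhammer q x - logQPochhammer q (x + s)) / (1 - q ^ x) ^ s := by
  have hq : 0 < 1 - q := by linarith
  have hqx : 0 < 1 - q ^ x := sub_pos.2 (rpow_lt_one hq0.le hq1 hx)
  rw [qGamma_eq_rpow_mul_exp hq0 hq1 hx, qGamma_eq_rpow_mul_exp hq0 hq1 hxs, qBracket,
    div_rpow hqx.le hq.le, show 1 - (x + s) = (1 - x) + -s by ring, rpow_add hq, rpow_neg hq.le,
    show logQPochhammer q 1 - logQPochhammer q (x + s) =
      (logQPochhammer q x - logQPochhammer q (x + s)) + (logQPochhammer q 1 - logQPochhammer q x)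
      by ring, exp_add]
  have := (rpow_pos_of_pos hq (1 - x)).ne'
  have := (rpow_pos_of_pos hq s).ne'
  have := (rpow_pos_of_pos hqx s).ne'
  have := (exp_pos (logQPochhammer q 1 - logQPochhammer q x)).ne'
  field_simp

end QPochhammer

theorem qWendel_limit_general (q s : ℝ) (hq : q ∈ Set.Ioo (0 : ℝ) 1) :
    Filter.Tendsto (fun x : ℝ => qGamma q (x + s) / (qBracket q x ^ s * qGamma q x))
      Filter.atTop (nhds 1) := by
  obtain ⟨hq0, hq1⟩ := hq
  have hlog := tendsto_logQPochhammer_atTop hq0 hq1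
  have hbracket : Tendsto (fun x : ℝ => (1 - q ^ x) ^ s) atTop (𝓝 1) := by
    simpa using ((tendsto_const_nhds (x := (1 : ℝ))).sub
      (tendsto_rpow_atTop_of_base_lt_one q (by linarith) hq1)).rpow_const (Or.inl (by norm_num))
  have hlim : Tendsto (fun x : ℝ =>
      exp (logQPochhammer q x - logQPochhammer q (x + s)) / (1 - q ^ x) ^ s) atTop (𝓝 1) := by
    have hshift := hlog.comp (tendsto_atTop_add_const_right _ s tendsto_id)
    simpa [Pi.div_def] using (hlog.sub hshift).rexp.div hbracket one_ne_zero
  refine hlim.congr' ?_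
  filter_upwards [eventually_gt_atTop 0, eventually_gt_atTop (-s)] with x hx hxs
  exact (qGamma_add_div_qBracket_rpow_mul_qGamma hq0 hq1 hx (by linarith)).symm

theorem qWendel_limit (q s : ℝ) (hq : q ∈ Set.Ioo (0 : ℝ) 1)
    (hs : s ∈ Set.Ioo (0 : ℝ) 1) :
    Filter.Tendsto (fun x : ℝ => qGamma q (x + s) / (qBracket q x ^ s * qGamma q x))
      Filter.atTop (nhds 1) :=
  qWendel_limit_general q s hq
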